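/- arXiv:1505.02005 — 3 statements merged into one kernel-verified Lean document; each statement's English description precedes it below -/
import Mathlib

section
/- Let A = (a_{ij}) be an n×n real matrix with a_{ij} ≥ 0 for i ≠ j, a_{ii} > 0, and let b ∈ ℝⁿ with b_j > 0 for all j. If x ∈ ℝⁿ satisfies A x = b and x has some nonpositive coordinate (x_i ≤ 0 for some i), then there exists an index i with b_i ≤ Σ_{j≠i} a_{ij} · (b_j / a_{jj}). -/
open Matrix

theorem kaykobad_contrapositive (n : ℕ) (A : Matrix (Fin n) (Fin n) ℝ)
    (b x : Fin n → ℝ)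
    (hoff : ∀ i j, i ≠ j → 0 ≤ A i j) (hdiag : ∀ i, 0 < A i i)
    (hb : ∀ j, 0 < b j)
    (hx : A *ᵥ x = b) (hneg : ∃ i, x i ≤ 0) :
    ∃ i, b i ≤ ∑ j ∈ Finset.univ.erase i, A i j * (b j / A j j) := by
  by_contra hcon
  push_neg at hcon
  obtain ⟨k, hk⟩ := hneg
  set c : Fin n → ℝ := fun j => b j / A j j with hc
  have hcpos : ∀ j, 0 < c j := fun j => div_pos (hb j) (hdiag j)
  have hcb : ∀ j, A j j * c j = b j := by
    intro j
    rw [hc]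
    rw [mul_comm, div_mul_cancel₀ _ (hdiag j).ne']
  obtain ⟨i, -, hi⟩ := Finset.exists_min_image Finset.univ (fun j => x j / c j)
    ⟨k, Finset.mem_univ k⟩
  set t : ℝ := x i / c i with ht
  have hmin : ∀ j, t * c j ≤ x j := by
    intro j
    have h1 : t ≤ x j / c j := hi j (Finset.mem_univ j)
    have h2 : t * c j ≤ (x j / c j) * c j :=
      mul_le_mul_of_nonneg_right h1 (hcpos j).le
    rwa [div_mul_cancel₀ _ (hcpos j).ne'] at h2
  have ht0 : t ≤ 0 := by
    have h1 : t ≤ x k / c k := hi k (Finset.mem_univ k)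
    have h2 : x k / c k ≤ 0 := div_nonpos_of_nonpos_of_nonneg hk (hcpos k).le
    linarith
  have hti : x i = t * c i := by
    rw [ht, div_mul_cancel₀ _ (hcpos i).ne']
  have hrow : ∀ j, A j j * x j = b j - ∑ m ∈ Finset.univ.erase j, A j m * x m := by
    intro j
    have h1 : (A *ᵥ x) j = b j := by rw [hx]
    have h2 : ∑ m, A j m * x m = b j := by
      simpa [Matrix.mulVec, dotProduct] using h1
    rw [← Finset.add_sum_erase _ (fun m => A j m * x m) (Finset.mem_univ j)] at h2
    linarith
  -- Step 1: upper bound x j ≤ (1 - t) * c j for all j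
  have hub : ∀ j, x j ≤ (1 - t) * c j := by
    intro j
    have hS : ∑ m ∈ Finset.univ.erase j, A j m * c m < b j := hcon j
    have hS0 : 0 ≤ ∑ m ∈ Finset.univ.erase j, A j m * c m :=
      Finset.sum_nonneg fun m hm =>
        mul_nonneg (hoff j m (Finset.ne_of_mem_erase hm).symm) (hcpos m).le
    have hlo : t * ∑ m ∈ Finset.univ.erase j, A j m * c m ≤
        ∑ m ∈ Finset.univ.erase j, A j m * x m := by
      rw [Finset.mul_sum]
      refine Finset.sum_le_sum fun m hm => ?_
      have hAm : 0 ≤ A j m := hoff j m (Finset.ne_of_mem_erase hm).symm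
      calc t * (A j m * c m) = A j m * (t * c m) := by ring
        _ ≤ A j m * x m := mul_le_mul_of_nonneg_left (hmin m) hAm
    have htS : t * b j ≤ t * ∑ m ∈ Finset.univ.erase j, A j m * c m :=
      mul_le_mul_of_nonpos_left hS.le ht0
    have h3 : A j j * x j ≤ (1 - t) * b j := by
      have := hrow j
      nlinarith
    rw [← hcb j] at h3
    have h4 : A j j * x j ≤ A j j * ((1 - t) * c j) := by linarith [h3]; 
    exact le_of_mul_le_mul_left (by linarith [h4]) (hdiag j)
  -- Step 2: contradiction at row i
  have hS : ∑ m ∈ Finset.univ.erase i, A i m * c m < b i := hcon i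
  have hup : ∑ m ∈ Finset.univ.erase i, A i m * x m ≤
      (1 - t) * ∑ m ∈ Finset.univ.erase i, A i m * c m := by
    rw [Finset.mul_sum]
    refine Finset.sum_le_sum fun m hm => ?_
    have hAm : 0 ≤ A i m := hoff i m (Finset.ne_of_mem_erase hm).symm
    calc A i m * x m ≤ A i m * ((1 - t) * c m) :=
          mul_le_mul_of_nonneg_left (hub m) hAm
      _ = (1 - t) * (A i m * c m) := by ring
  have h1t : 0 < 1 - t := by linarith
  have hstrict : (1 - t) * ∑ m ∈ Finset.univ.erase i, A i m * c m < (1 - t) * b i :=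
    mul_lt_mul_of_pos_left hS h1t
  have hfin : A i i * x i > t * b i := by
    have := hrow i
    nlinarith
  rw [← hcb i, hti] at hfin
  nlinarith [hdiag i]
end

section
/- Let π : Fin I × Fin J → ℝ be strictly positive and fix j ≠ j' in Fin J. Define ν_i = π(i,j)/π(i,j'), ν_n = min_i ν_i, ν_m = max_i ν_i. Let α : Fin I → ℝ satisfy Σ_i π(i,j) α(i) = b_j and Σ_i π(i,j') α(i) = b_{j'} with b_j, b_{j'} > 0. If b_j / b_{j'} ∉ (ν_n, ν_m) (i.e., b_j/b_{j'} ≤ ν_n or b_j/b_{j'} ≥ ν_m), and the ratios ν_i are not all equal, then α(i) < 0 for at least one i, or α is not strictly positive. -/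
/-! If every `α i` were positive, the weights `π (i, j') * α i` would be positive and
`b j / b j'` would be the average, with these weights, of the ratios `π (i, j) / π (i, j')`. As these
ratios are not all equal, such an average lies strictly between their minimum and maximum. -/

open Finset

namespace Finset

variable {ι α : Type*} {s : Finset ι}

lemma exists_inf'_lt_of_ne [LinearOrder α] (hs : s.Nonempty) {f : ι → α} {i i' : ι}
    (hi : i ∈ s) (hi' : i' ∈ s) (hne : f i ≠ f i') : ∃ k ∈ s, s.inf' hs f < f k := by
  rcases hne.lt_or_gt with hlt | hlt
  · exact ⟨i', hi', (inf'_le f hi).trans_lt hlt⟩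
  · exact ⟨i, hi, (inf'_le f hi').trans_lt hlt⟩

lemma exists_lt_sup'_of_ne [LinearOrder α] (hs : s.Nonempty) {f : ι → α} {i i' : ι}
    (hi : i ∈ s) (hi' : i' ∈ s) (hne : f i ≠ f i') : ∃ k ∈ s, f k < s.sup' hs f := by
  rcases hne.lt_or_gt with hlt | hlt
  · exact ⟨i, hi, hlt.trans_le (le_sup' f hi')⟩
  · exact ⟨i', hi', hlt.trans_le (le_sup' f hi)⟩

variable [Field α] [LinearOrder α] [IsStrictOrderedRing α] {f w : ι → α}

lemma inf'_lt_sum_mul_div_sum (hs : s.Nonempty) (hw : ∀ i ∈ s, 0 < w i)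
    (hf : ∃ k ∈ s, s.inf' hs f < f k) :
    s.inf' hs f < (∑ i ∈ s, f i * w i) / ∑ i ∈ s, w i := by
  obtain ⟨k, hk, hlt⟩ := hf
  rw [lt_div_iff₀ (sum_pos hw hs), mul_sum]
  exact sum_lt_sum (fun i hi => mul_le_mul_of_nonneg_right (inf'_le f hi) (hw i hi).le)
    ⟨k, hk, mul_lt_mul_of_pos_right hlt (hw k hk)⟩

lemma sum_mul_div_sum_lt_sup' (hs : s.Nonempty) (hw : ∀ i ∈ s, 0 < w i)
    (hf : ∃ k ∈ s, f k < s.sup' hs f) :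
    (∑ i ∈ s, f i * w i) / ∑ i ∈ s, w i < s.sup' hs f := by
  obtain ⟨k, hk, hlt⟩ := hf
  rw [div_lt_iff₀ (sum_pos hw hs), mul_sum]
  exact sum_lt_sum (fun i hi => mul_le_mul_of_nonneg_right (le_sup' f hi) (hw i hi).le)
    ⟨k, hk, mul_lt_mul_of_pos_right hlt (hw k hk)⟩

end Finset

theorem boundary_sufficient_general (I J : ℕ) (hI : (Finset.univ : Finset (Fin I)).Nonempty)
    (π : Fin I × Fin J → ℝ) (hπ : ∀ p, 0 < π p)
    (j j' : Fin J)
    (α : Fin I → ℝ) (b : Fin J → ℝ)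
    (heq1 : ∑ i, π (i, j) * α i = b j)
    (heq2 : ∑ i, π (i, j') * α i = b j')
    (hout : b j / b j' ≤ Finset.univ.inf' hI (fun i => π (i, j) / π (i, j')) ∨
            Finset.univ.sup' hI (fun i => π (i, j) / π (i, j')) ≤ b j / b j')
    (hne : ∃ i i' : Fin I, π (i, j) / π (i, j') ≠ π (i', j) / π (i', j')) :
    (∃ i, α i < 0) ∨ ¬ (∀ i, 0 < α i) := by
  refine .inr fun hα => ?_
  obtain ⟨i, i', hne⟩ := hne
  have hw : ∀ i ∈ univ, 0 < π (i, j') * α i := fun i _ => mul_pos (hπ _) (hα i)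
  have hratio : b j / b j' =
      (∑ i, π (i, j) / π (i, j') * (π (i, j') * α i)) / ∑ i, π (i, j') * α i := by
    rw [← heq1, ← heq2]
    congr 1
    exact sum_congr rfl fun i _ => by field_simp [(hπ (i, j')).ne']
  rcases hout with hle | hle
  · exact (hle.trans_lt (hratio ▸ inf'_lt_sum_mul_div_sum hI hw
      (exists_inf'_lt_of_ne hI (mem_univ i) (mem_univ i') hne))).false
  · exact (hle.trans_lt (hratio ▸ sum_mul_div_sum_lt_sup' hI hw
      (exists_lt_sup'_of_ne hI (mem_univ i) (mem_univ i') hne))).false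

theorem boundary_sufficient (I J : ℕ) (hI : (Finset.univ : Finset (Fin I)).Nonempty)
    (π : Fin I × Fin J → ℝ) (hπ : ∀ p, 0 < π p)
    (j j' : Fin J) (hjj : j ≠ j')
    (α : Fin I → ℝ) (b : Fin J → ℝ)
    (hbj : 0 < b j) (hbj' : 0 < b j')
    (heq1 : ∑ i, π (i, j) * α i = b j)
    (heq2 : ∑ i, π (i, j') * α i = b j')
    (hout : b j / b j' ≤ Finset.univ.inf' hI (fun i => π (i, j) / π (i, j')) ∨
            Finset.univ.sup' hI (fun i => π (i, j) / π (i, j')) ≤ b j / b j')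
    (hne : ∃ i i' : Fin I, π (i, j) / π (i, j') ≠ π (i', j) / π (i', j')) :
    (∃ i, α i < 0) ∨ ¬ (∀ i, 0 < α i) :=
  boundary_sufficient_general I J hI π hπ j j' α b heq1 heq2 hout hne
end

section
/- There exists a 3×3 matrix A with strictly positive entries and vectors b, b* with strictly positive entries such that the solutions α of Aᵀ α = b and β of A β = b* each have at least one strictly negative coordinate, yet for every pair of distinct columns (j,j') of A, the ratio b_j/b_{j'} lies strictly between min_i A_{ij}/A_{ij'} and max_i A_{ij}/A_{ij'}, and similarly for every pair of distinct rows (i,i'), b*_i/b*_{i'} lies strictly between min_j A_{ij}/A_{i'j} and max_j A_{ij}/A_{i'j}. -/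
/-!
The ratio conditions of Park et al. only compare the right-hand side with pairs of columns (or
rows) at a time, while the sign of a solution of a `3 × 3` system depends on all three columns
jointly. A single positive integer matrix exhibits the gap: every pairwise ratio of `b` (resp. `b*`)
falls strictly inside the range of the corresponding ratios of the entries of `A`, yet by Cramer's
rule `(Aᵀ)⁻¹ b` and `A⁻¹ b*` each have a negative coordinate.
-/

open Matrix

section RatioCondition

variable {m n : Type*} [Fintype n] [Nonempty n]

def RowRatiosStrictlyInside (M : Matrix m n ℝ) (v : m → ℝ) : Prop :=
  ∀ i i', i ≠ i' →
    Finset.univ.inf' Finset.univ_nonempty (fun j => M i j / M i' j) < v i / v i' ∧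
    v i / v i' < Finset.univ.sup' Finset.univ_nonempty (fun j => M i j / M i' j)

theorem rowRatiosStrictlyInside_iff (M : Matrix m n ℝ) (v : m → ℝ) :
    RowRatiosStrictlyInside M v ↔ ∀ i i', i ≠ i' →
      (∃ j, M i j / M i' j < v i / v i') ∧ ∃ j, v i / v i' < M i j / M i' j := by
  simp only [RowRatiosStrictlyInside, Finset.inf'_lt_iff, Finset.lt_sup'_iff, Finset.mem_univ,
    true_and]

end RatioCondition

namespace ParkCounterexample

def A : Matrix (Fin 3) (Fin 3) ℝ := !![621, 290, 284; 260, 131, 117; 93, 30, 18]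

def b : Fin 3 → ℝ := ![456, 156, 125]

def bs : Fin 3 → ℝ := ![135, 60, 20]

noncomputable def α : Fin 3 → ℝ := ![11759 / 17986, -28466 / 26979, 564521 / 161874]

noncomputable def β : Fin 3 → ℝ := ![500 / 3519, 2315 / 7038, -1205 / 7038]

theorem A_pos (i j : Fin 3) : 0 < A i j := by
  fin_cases i <;> fin_cases j <;> norm_num [A]

theorem b_pos (j : Fin 3) : 0 < b j := by
  fin_cases j <;> norm_num [b]

theorem bs_pos (i : Fin 3) : 0 < bs i := by
  fin_cases i <;> norm_num [bs]

theorem transpose_mulVec_α : Aᵀ *ᵥ α = b := by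
  ext i
  fin_cases i <;> norm_num [A, α, b, mulVec, dotProduct, Fin.sum_univ_three, cons_val_two]

theorem mulVec_β : A *ᵥ β = bs := by
  ext i
  fin_cases i <;> norm_num [A, β, bs, mulVec, dotProduct, Fin.sum_univ_three, cons_val_two]

theorem α_one_neg : α 1 < 0 := by
  norm_num [α]

theorem β_two_neg : β 2 < 0 := by
  norm_num [β, cons_val_two]

-- The paper's condition on the columns of `A` is, definitionally, this condition on the rows of `Aᵀ`.
theorem rowRatiosStrictlyInside_transpose_b : RowRatiosStrictlyInside Aᵀ b := by
  rw [rowRatiosStrictlyInside_iff]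
  intro j j'
  fin_cases j <;> fin_cases j' <;> norm_num [A, b, Fin.exists_fin_succ]

theorem rowRatiosStrictlyInside_bs : RowRatiosStrictlyInside A bs := by
  rw [rowRatiosStrictlyInside_iff]
  intro i i'
  fin_cases i <;> fin_cases i' <;> norm_num [A, bs, Fin.exists_fin_succ]

end ParkCounterexample

open ParkCounterexample in
theorem sufficient_not_necessary :
    ∃ (A : Matrix (Fin 3) (Fin 3) ℝ) (b bs α β : Fin 3 → ℝ),
      (∀ i j, 0 < A i j) ∧ (∀ j, 0 < b j) ∧ (∀ i, 0 < bs i) ∧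
      Aᵀ *ᵥ α = b ∧ A *ᵥ β = bs ∧
      (∃ i, α i < 0) ∧ (∃ j, β j < 0) ∧
      (∀ j j' : Fin 3, j ≠ j' →
        Finset.univ.inf' Finset.univ_nonempty (fun i => A i j / A i j') < b j / b j' ∧
        b j / b j' < Finset.univ.sup' Finset.univ_nonempty (fun i => A i j / A i j')) ∧
      (∀ i i' : Fin 3, i ≠ i' →
        Finset.univ.inf' Finset.univ_nonempty (fun j => A i j / A i' j) < bs i / bs i' ∧
        bs i / bs i' < Finset.univ.sup' Finset.univ_nonempty (fun j => A i j / A i' j)) :=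
  ⟨A, b, bs, α, β, A_pos, b_pos, bs_pos, transpose_mulVec_α, mulVec_β, ⟨1, α_one_neg⟩,
    ⟨2, β_two_neg⟩, rowRatiosStrictlyInside_transpose_b, rowRatiosStrictlyInside_bs⟩
end
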